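/- arXiv:math/0510042 — 2 statements merged into one kernel-verified Lean document; each statement's English description precedes it below -/
import Mathlib

section
/- The function m_β(t) = Σ_{k=0}^∞ ((-t)^k / k!) Π_{j=0}^{k-1} (1 - g(j+β)), where g(λ) = (λ+1)^{-d}, satisfies the delay differential-type renewal equation m_β'(t) = -m_β(t) + E[W^β m_β(tW)], where W is a product of d independent uniform [0,1] random variables, together with the initial condition m_β(0) = 1. -/
/-!
With `P k = ∏_{j<k} (1 - g (j + β))`, the series `m t = ∑ (-t)^k / k! * P k` differentiates
termwise to `-∑ (-t)^k / k! * P (k + 1)`, and `P (k + 1) = P k - P k * g (k + β)`. Since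
`0 ≤ W ≤ 1`, the series for `W^β m (t W)` can be integrated termwise, and by independence
`E[W^(k + β)] = E[U^(k + β)]^d = g (k + β)`.
-/

open MeasureTheory ProbabilityTheory Finset

section ExpSeries

variable {p : ℕ → ℝ} {C : ℝ}

theorem summable_pow_div_factorial_mul (hp : ∀ k, |p k| ≤ C) (x : ℝ) :
    Summable fun k => x ^ k / k.factorial * p k := by
  refine .of_norm_bounded ((Real.summable_pow_div_factorial |x|).mul_right C) fun k => ?_
  rw [Real.norm_eq_abs, abs_mul, abs_div, abs_pow, Nat.abs_cast]
  exact mul_le_mul_of_nonneg_left (hp k) (by positivity)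

theorem hasDerivAt_pow_succ_div_factorial (k : ℕ) (x : ℝ) :
    HasDerivAt (fun y : ℝ => y ^ (k + 1) / (k + 1).factorial) (x ^ k / k.factorial) x := by
  refine ((hasDerivAt_pow (k + 1) x).div_const _).congr_deriv ?_
  push_cast [Nat.factorial_succ, Nat.add_sub_cancel]
  field_simp

theorem hasDerivAt_tsum_pow_div_factorial_mul (hp : ∀ k, |p k| ≤ C) (x : ℝ) :
    HasDerivAt (fun y => ∑' k, y ^ k / k.factorial * p k)
      (∑' k, x ^ k / k.factorial * p (k + 1)) x := by
  have hshift : (fun y => ∑' k, y ^ k / k.factorial * p k) =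
      fun y => p 0 + ∑' k, y ^ (k + 1) / (k + 1).factorial * p (k + 1) := by
    funext y
    rw [(summable_pow_div_factorial_mul hp y).tsum_eq_zero_add]
    simp
  rw [hshift]
  refine HasDerivAt.const_add _ ?_
  set R := |x| + 1
  refine hasDerivAt_tsum_of_isPreconnected ((Real.summable_pow_div_factorial R).mul_right C)
    isOpen_Ioo (convex_Ioo (-R) R).isPreconnected
    (fun k y _ => (hasDerivAt_pow_succ_div_factorial k y).mul_const (p (k + 1)))
    (fun k y hy => ?_) (y₀ := 0) (by simp; positivity) (by simp) ?_
  · rw [Real.norm_eq_abs, abs_mul, abs_div, abs_pow, Nat.abs_cast]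
    have hyR : |y| ≤ R := (abs_lt.2 hy).le
    gcongr
    exact hp (k + 1)
  · exact abs_lt.1 (by simp [R])

end ExpSeries

theorem abs_prod_range_one_sub_le_one {g : ℕ → ℝ} (hg : ∀ j, |1 - g j| ≤ 1) (k : ℕ) :
    |∏ j ∈ range k, (1 - g j)| ≤ 1 := by
  rw [abs_prod]
  exact prod_le_one (fun j _ => abs_nonneg _) fun j _ => hg j

theorem hasDerivAt_tsum_neg_pow_div_factorial_mul_prod {g : ℕ → ℝ} (hg : ∀ j, |1 - g j| ≤ 1)
    (t : ℝ) :
    HasDerivAt (fun t => ∑' k, (-t) ^ k / k.factorial * ∏ j ∈ range k, (1 - g j))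
      (-(∑' k, (-t) ^ k / k.factorial * ∏ j ∈ range k, (1 - g j)) +
        ∑' k, (-t) ^ k / k.factorial * (∏ j ∈ range k, (1 - g j)) * g k) t := by
  set P : ℕ → ℝ := fun k => ∏ j ∈ range k, (1 - g j)
  have hP : ∀ k, |P k| ≤ 1 := abs_prod_range_one_sub_le_one hg
  have hPg : ∀ k, |P k * g k| ≤ 2 := fun k => by
    have hg2 : |g k| ≤ 2 := by
      have := abs_sub_abs_le_abs_sub (g k) 1
      rw [abs_sub_comm, abs_one] at this
      linarith [hg k]
    simpa [abs_mul] using mul_le_mul (hP k) hg2 (abs_nonneg _) zero_le_one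
  have hsucc : ∀ k, (-t) ^ k / k.factorial * P (k + 1) =
      (-t) ^ k / k.factorial * P k - (-t) ^ k / k.factorial * P k * g k := fun k => by
    simp only [P, prod_range_succ]
    ring
  refine ((hasDerivAt_tsum_pow_div_factorial_mul hP (-t)).comp t
    (hasDerivAt_neg t)).congr_deriv ?_
  rw [tsum_congr hsucc, (summable_pow_div_factorial_mul hP (-t)).tsum_sub]
  · ring
  · simpa only [mul_assoc] using summable_pow_div_factorial_mul hPg (-t)

theorem abs_one_sub_one_div_add_one_pow_le_one {x : ℝ} (hx : 0 ≤ x) (d : ℕ) :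
    |1 - 1 / (x + 1) ^ d| ≤ 1 := by
  have h0 : 0 ≤ 1 / (x + 1) ^ d := by positivity
  have h1 : 1 / (x + 1) ^ d ≤ 1 := div_le_one_of_le₀ (one_le_pow₀ (by linarith)) (by positivity)
  rw [abs_le]
  constructor <;> linarith

section Integration

variable {Ω : Type*} [MeasurableSpace Ω] {μ : Measure Ω}

theorem integral_tsum_mul_of_abs_le_one [IsFiniteMeasure μ] {c : ℕ → ℝ} (hc : Summable c)
    {f : ℕ → Ω → ℝ} (hf : ∀ k, AEStronglyMeasurable (f k) μ)
    (hf1 : ∀ k, ∀ᵐ ω ∂μ, |f k ω| ≤ 1) :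
    ∫ ω, ∑' k, c k * f k ω ∂μ = ∑' k, c k * ∫ ω, f k ω ∂μ := by
  have hint : ∀ k, Integrable (f k) μ := fun k => .of_bound (hf k) 1 (hf1 k)
  have hnorm : ∀ k, ∫ ω, ‖c k * f k ω‖ ∂μ ≤ |c k| * μ.real Set.univ := fun k => calc
    ∫ ω, ‖c k * f k ω‖ ∂μ ≤ ∫ _, |c k| ∂μ := by
      refine integral_mono_ae ((hint k).const_mul (c k)).norm (integrable_const _) ?_
      filter_upwards [hf1 k] with ω hω
      simpa [abs_mul] using mul_le_mul_of_nonneg_left hω (abs_nonneg (c k))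
    _ = |c k| * μ.real Set.univ := by rw [integral_const, smul_eq_mul, mul_comm]
  rw [← integral_tsum_of_summable_integral_norm (fun k => (hint k).const_mul (c k))]
  · simp only [integral_const_mul]
  · exact .of_nonneg_of_le (fun k => integral_nonneg fun ω => norm_nonneg _) hnorm
      (hc.abs.mul_right _)

theorem integral_pow_mul_tsum_pow_div_factorial_mul [IsFiniteMeasure μ] {W : Ω → ℝ}
    (hW : AEMeasurable W μ) (hW1 : ∀ᵐ ω ∂μ, |W ω| ≤ 1) {p : ℕ → ℝ} {C : ℝ}
    (hp : ∀ k, |p k| ≤ C) (β : ℕ) (x : ℝ) :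
    ∫ ω, W ω ^ β * ∑' k, (x * W ω) ^ k / k.factorial * p k ∂μ =
      ∑' k, x ^ k / k.factorial * p k * ∫ ω, W ω ^ (k + β) ∂μ := by
  have hexpand : ∀ ω, W ω ^ β * ∑' k, (x * W ω) ^ k / k.factorial * p k =
      ∑' k, x ^ k / k.factorial * p k * W ω ^ (k + β) := fun ω => by
    rw [← tsum_mul_left]
    congr with k
    ring
  simp_rw [hexpand]
  refine integral_tsum_mul_of_abs_le_one (summable_pow_div_factorial_mul hp x)
    (fun k => (hW.pow_const _).aestronglyMeasurable) fun k => ?_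
  filter_upwards [hW1] with ω hω
  rw [abs_pow]
  exact pow_le_one₀ (abs_nonneg _) hω

variable {X : Ω → ℝ}

theorem aemeasurable_of_map_eq_volume_Icc (hX : μ.map X = volume.restrict (Set.Icc 0 1)) :
    AEMeasurable X μ :=
  .of_map_ne_zero (by simp [hX])

theorem ae_mem_Icc_of_map_eq_volume_Icc (hX : μ.map X = volume.restrict (Set.Icc 0 1)) :
    ∀ᵐ ω ∂μ, X ω ∈ Set.Icc (0 : ℝ) 1 := by
  have : ∀ᵐ x ∂μ.map X, x ∈ Set.Icc (0 : ℝ) 1 := by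
    rw [hX]
    exact ae_restrict_mem measurableSet_Icc
  exact ae_of_ae_map (aemeasurable_of_map_eq_volume_Icc hX) this

theorem integral_pow_of_map_eq_volume_Icc (hX : μ.map X = volume.restrict (Set.Icc 0 1))
    (n : ℕ) : ∫ ω, X ω ^ n ∂μ = 1 / ((n : ℝ) + 1) := by
  rw [← integral_map (f := fun x : ℝ => x ^ n) (aemeasurable_of_map_eq_volume_Icc hX)
    (by fun_prop), hX, integral_Icc_eq_integral_Ioc,
    ← intervalIntegral.integral_of_le zero_le_one, integral_pow]
  simp

variable {ι : Type*} [Fintype ι] {U : ι → Ω → ℝ}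

theorem ae_abs_prod_le_one_of_map_eq_volume_Icc
    (hunif : ∀ i, μ.map (U i) = volume.restrict (Set.Icc 0 1)) :
    ∀ᵐ ω ∂μ, |∏ i, U i ω| ≤ 1 := by
  filter_upwards [ae_all_iff.2 fun i => ae_mem_Icc_of_map_eq_volume_Icc (hunif i)] with ω hω
  rw [abs_prod]
  exact prod_le_one (fun _ _ => abs_nonneg _) fun i _ =>
    abs_le.2 ⟨by linarith [(hω i).1], (hω i).2⟩

theorem integral_prod_pow_of_iIndepFun (hindep : iIndepFun U μ)
    (hunif : ∀ i, μ.map (U i) = volume.restrict (Set.Icc 0 1)) (n : ℕ) :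
    ∫ ω, (∏ i, U i ω) ^ n ∂μ = 1 / ((n : ℝ) + 1) ^ Fintype.card ι := by
  simp_rw [← prod_pow]
  rw [hindep.integral_fun_prod_comp (f := fun _ x => x ^ n)
    (fun i => aemeasurable_of_map_eq_volume_Icc (hunif i)) (fun _ => by fun_prop)]
  simp [integral_pow_of_map_eq_volume_Icc (hunif _), prod_const]

end Integration

theorem renewal_equation_for_m_general
    {Ω : Type*} [MeasurableSpace Ω] (μ : Measure Ω)
    (d β : ℕ) (U : Fin d → Ω → ℝ)
    (hindep : iIndepFun U μ)
    (hunif : ∀ i, Measure.map (U i) μ = volume.restrict (Set.Icc (0:ℝ) 1))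
    (m : ℝ → ℝ)
    (hm : ∀ t, m t = ∑' k : ℕ, (-t) ^ k / (Nat.factorial k : ℝ) *
        ∏ j ∈ Finset.range k, (1 - 1 / ((j : ℝ) + β + 1) ^ d)) :
    m 0 = 1 ∧
      ∀ t : ℝ, HasDerivAt m
        (-(m t) + ∫ ω, (∏ i, U i ω) ^ β * m (t * ∏ i, U i ω) ∂μ) t := by
  have := hindep.isProbabilityMeasure
  set g : ℕ → ℝ := fun j => 1 / ((j : ℝ) + β + 1) ^ d
  have hg : ∀ j, |1 - g j| ≤ 1 := fun j =>
    abs_one_sub_one_div_add_one_pow_le_one (by positivity : (0 : ℝ) ≤ j + β) d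
  have hmoment : ∀ k, ∫ ω, (∏ i, U i ω) ^ (k + β) ∂μ = g k := fun k => by
    rw [integral_prod_pow_of_iIndepFun hindep hunif, Fintype.card_fin]
    push_cast
    ring
  have hintegral : ∀ t, ∫ ω, (∏ i, U i ω) ^ β * m (t * ∏ i, U i ω) ∂μ =
      ∑' k, (-t) ^ k / k.factorial * (∏ j ∈ range k, (1 - g j)) * g k := fun t => by
    simp_rw [hm, ← neg_mul]
    rw [integral_pow_mul_tsum_pow_div_factorial_mul
      (Finset.aemeasurable_fun_prod _ fun i _ => aemeasurable_of_map_eq_volume_Icc (hunif i))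
      (ae_abs_prod_le_one_of_map_eq_volume_Icc hunif) (abs_prod_range_one_sub_le_one hg)]
    simp_rw [hmoment]
  refine ⟨?_, fun t => ?_⟩
  · rw [hm, tsum_eq_single 0 fun k hk => by simp [hk]]
    simp
  · rw [hintegral, show m = _ from funext hm]
    exact hasDerivAt_tsum_neg_pow_div_factorial_mul_prod hg t

/-- The series `m_β(t) = Σ_k ((-t)^k/k!) Π_{j<k} (1 - g(j+β))` with `g(λ) = (λ+1)^{-d}`
satisfies `m_β(0) = 1` and the renewal equation `m_β'(t) = -m_β(t) + E[W^β m_β(tW)]`,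
where `W` is a product of `d` independent uniform `[0,1]` random variables. -/
theorem renewal_equation_for_m
    {Ω : Type*} [MeasurableSpace Ω] (μ : Measure Ω) [IsProbabilityMeasure μ]
    (d β : ℕ) (hd : 1 ≤ d) (hβ : 1 ≤ β) (U : Fin d → Ω → ℝ)
    (hmeas : ∀ i, Measurable (U i))
    (hindep : iIndepFun U μ)
    (hunif : ∀ i, Measure.map (U i) μ = volume.restrict (Set.Icc (0:ℝ) 1))
    (m : ℝ → ℝ)
    (hm : ∀ t, m t = ∑' k : ℕ, (-t) ^ k / (Nat.factorial k : ℝ) *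
        ∏ j ∈ Finset.range k, (1 - 1 / ((j : ℝ) + β + 1) ^ d)) :
    m 0 = 1 ∧
      ∀ t : ℝ, HasDerivAt m
        (-(m t) + ∫ ω, (∏ i, U i ω) ^ β * m (t * ∏ i, U i ω) ∂μ) t :=
  renewal_equation_for_m_general μ d β U hindep hunif m hm
end

section
/- For d = 2 the formula p_n = Σ_{k=0}^{n-1} C(n-1,k) (-1)^k Π_{j=0}^{k-1}(1 - g(j+1)) with g(λ) = (λ+1)^{-2} yields p_n = 1/(2n) for all n ≥ 2 (and p_1 = 1). -/
/-!
Since `1 - 1/(j+2)^2 = (j+1)(j+3)/(j+2)^2`, the product telescopes to `(k+2)/(2(k+1))`,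
i.e. `(1 + 1/(k+1))/2`. The alternating binomial sum of the constant part vanishes for `n ≥ 2`,
while for `m = n - 1` one has `Σ_k C(m,k)(-1)^k/(k+1) = 1/(m+1)` (absorb `1/(k+1)` via `(m+1) C(m,k) = (k+1) C(m+1,k+1)`),
leaving `1/(2n)`.
-/

open Finset

section

variable {K : Type*} [Field K] [CharZero K]

theorem prod_range_one_sub_inv_add_two_sq (k : ℕ) :
    ∏ j ∈ range k, (1 - 1 / ((j : K) + 2) ^ 2) = (1 + 1 / ((k : K) + 1)) / 2 := by
  induction k with
  | zero => norm_num
  | succ k ih =>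
    rw [prod_range_succ, ih]
    have hk₁ : (k : K) + 1 ≠ 0 := by norm_cast
    have hk₂ : (k : K) + 2 ≠ 0 := by norm_cast
    rw [Nat.cast_succ, add_assoc, one_add_one_eq_two]
    field_simp
    ring

theorem sum_range_choose_mul_neg_one_pow {R : Type*} [CommRing R] {m : ℕ} (hm : m ≠ 0) :
    ∑ k ∈ range (m + 1), (m.choose k : R) * (-1) ^ k = 0 := by
  have h := congrArg (Int.cast : ℤ → R) (Int.alternating_sum_range_choose_of_ne hm)
  push_cast at h
  simpa only [mul_comm] using h

theorem sum_range_choose_succ_succ_mul_neg_one_pow {R : Type*} [CommRing R] (m : ℕ) :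
    ∑ k ∈ range (m + 1), ((m + 1).choose (k + 1) : R) * (-1) ^ k = 1 := by
  have h := sum_range_choose_mul_neg_one_pow (R := R) m.succ_ne_zero
  rw [sum_range_succ'] at h
  simp only [Nat.choose_zero_right, Nat.cast_one, pow_zero, mul_one] at h
  have flip : ∑ k ∈ range (m + 1), ((m + 1).choose (k + 1) : R) * (-1) ^ (k + 1)
      = -∑ k ∈ range (m + 1), ((m + 1).choose (k + 1) : R) * (-1) ^ k := by
    rw [← sum_neg_distrib]
    exact sum_congr rfl fun k _ => by ring
  linear_combination flip - h

theorem sum_range_choose_mul_neg_one_pow_div_succ (m : ℕ) :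
    ∑ k ∈ range (m + 1), (m.choose k : K) * (-1) ^ k / ((k : K) + 1) = 1 / ((m : K) + 1) := by
  have hm : (m : K) + 1 ≠ 0 := by norm_cast
  have absorb : ∀ k : ℕ, (m.choose k : K) / ((k : K) + 1) = ((m + 1).choose (k + 1) : K) / (m + 1) := by
    intro k
    have hk : (k : K) + 1 ≠ 0 := by norm_cast
    have h : ((m : K) + 1) * m.choose k = (m + 1).choose (k + 1) * ((k : K) + 1) := by
      exact_mod_cast Nat.add_one_mul_choose_eq m k
    field_simp
    linear_combination h
  calc ∑ k ∈ range (m + 1), (m.choose k : K) * (-1) ^ k / ((k : K) + 1)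
      = (∑ k ∈ range (m + 1), ((m + 1).choose (k + 1) : K) * (-1) ^ k) / (m + 1) := by
        rw [sum_div]
        exact sum_congr rfl fun k _ => by rw [mul_div_right_comm, absorb, div_mul_eq_mul_div]
    _ = 1 / ((m : K) + 1) := by rw [sum_range_choose_succ_succ_mul_neg_one_pow]

end

/-- For `d = 2` (so `g(λ) = 1/(λ+1)^2`), the chain-record probability formula
`p_n = Σ_{k=0}^{n-1} C(n-1,k)(-1)^k Π_{j=0}^{k-1}(1 - g(j+1))` yields
`p_1 = 1` and `p_n = 1/(2n)` for `n ≥ 2`. -/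
theorem chain_record_prob_dim_two :
    (∑ k ∈ Finset.range 1, ((0).choose k : ℝ) * (-1) ^ k *
        ∏ j ∈ Finset.range k, (1 - 1 / ((j : ℝ) + 2) ^ 2) = 1) ∧
    ∀ n : ℕ, 2 ≤ n →
      ∑ k ∈ Finset.range n, ((n - 1).choose k : ℝ) * (-1) ^ k *
          ∏ j ∈ Finset.range k, (1 - 1 / ((j : ℝ) + 2) ^ 2) = 1 / (2 * n) := by
  refine ⟨by simp, fun n hn => ?_⟩
  obtain ⟨m, rfl⟩ : ∃ m, n = m + 1 := ⟨n - 1, by omega⟩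
  have split : ∀ k : ℕ, (m.choose k : ℝ) * (-1) ^ k * ∏ j ∈ range k, (1 - 1 / ((j : ℝ) + 2) ^ 2)
      = (m.choose k : ℝ) * (-1) ^ k / 2 + (m.choose k : ℝ) * (-1) ^ k / ((k : ℝ) + 1) / 2 := by
    intro k
    rw [prod_range_one_sub_inv_add_two_sq]
    ring
  simp only [Nat.add_sub_cancel, split, sum_add_distrib, ← sum_div,
    sum_range_choose_mul_neg_one_pow (show m ≠ 0 by omega),
    sum_range_choose_mul_neg_one_pow_div_succ]
  push_cast
  field_simp
  ring
end
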